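/- arXiv:1505.00823 — 2 statements merged into one kernel-verified Lean document; each statement's English description precedes it below -/
import Mathlib

section
/- Let (m,n) be a coprime pair of positive integers and let R be a set of m+n nonnegative integers. Then R is the rank set of an (m,n)-Dyck path if and only if R is the rank set of an (n,m)-Dyck path (where in the latter the roles of m and n are interchanged, i.e., the rank of a point (a,b) in the n×m rectangle is nb−ma). -/
/-- The list of ranks of the lattice points visited by a path (excluding the final
point), starting from rank `r`.  A `true` entry is a north (`u`) step, which adds `m`
to the rank; a `false` entry is an east (`d`) step, which subtracts `n`. -/
def rankWalk (m n : ℤ) : List Bool → ℤ → List ℤ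
  | [], _ => []
  | b :: bs, r => r :: rankWalk m n bs (r + if b then m else -n)

/-- An `(m,n)`-path: a word of `n` north steps (`true`) and `m` east steps (`false`). -/
def IsPathWord (m n : ℕ) (P : List Bool) : Prop :=
  P.length = m + n ∧ P.count true = n

/-- An `(m,n)`-Dyck path: an `(m,n)`-path all of whose ranks are nonnegative. -/
def IsDyckWord (m n : ℕ) (P : List Bool) : Prop :=
  IsPathWord m n P ∧ ∀ r ∈ rankWalk (m : ℤ) (n : ℤ) P 0, 0 ≤ r

/-- The rank set of a path: the ranks of its `m+n` lattice points other than the endpoint. -/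
def rankSet (m n : ℕ) (P : List Bool) : Finset ℤ :=
  (rankWalk (m : ℤ) (n : ℤ) P 0).toFinset

/-- `R` is the rank set of some `(m,n)`-path. -/
def IsRankSet (m n : ℕ) (R : Finset ℤ) : Prop :=
  ∃ P : List Bool, IsPathWord m n P ∧ rankSet m n P = R

/-- `R` is the rank set of some `(m,n)`-Dyck path. -/
def IsDyckRankSet (m n : ℕ) (R : Finset ℤ) : Prop :=
  ∃ P : List Bool, IsDyckWord m n P ∧ rankSet m n P = R

def stepSum (m n : ℤ) (P : List Bool) : ℤ :=
  (P.map (fun b => if b then m else -n)).sum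

lemma stepSum_cons (m n : ℤ) (b : Bool) (bs : List Bool) :
    stepSum m n (b :: bs) = (if b then m else -n) + stepSum m n bs := by
  simp [stepSum]

lemma stepSum_append (m n : ℤ) (xs ys : List Bool) :
    stepSum m n (xs ++ ys) = stepSum m n xs + stepSum m n ys := by
  simp [stepSum]

lemma stepSum_reverse_not (m n : ℤ) (P : List Bool) :
    stepSum n m (P.reverse.map not) = -stepSum m n P := by
  induction P with
  | nil => simp [stepSum]
  | cons b bs ih =>
    have : (b :: bs).reverse.map not = bs.reverse.map not ++ [!b] := by simp
    rw [this, stepSum_append, ih, stepSum_cons]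
    cases b <;> simp [stepSum] <;> ring

lemma rankWalk_append (m n : ℤ) (xs ys : List Bool) (r : ℤ) :
    rankWalk m n (xs ++ ys) r = rankWalk m n xs r ++ rankWalk m n ys (r + stepSum m n xs) := by
  induction xs generalizing r with
  | nil => simp [rankWalk, stepSum]
  | cons b bs ih => simp [rankWalk, ih, stepSum_cons, add_assoc]

lemma rankWalk_transpose (m n : ℤ) (P : List Bool) (r : ℤ) :
    rankWalk n m (P.reverse.map not) r ++ [r - stepSum m n P]
      = r :: (rankWalk m n P (r - stepSum m n P)).reverse := by
  induction P generalizing r with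
  | nil => simp [rankWalk, stepSum]
  | cons b bs ih =>
    have h1 : (b :: bs).reverse.map not = bs.reverse.map not ++ [!b] := by simp
    rw [h1, rankWalk_append, stepSum_reverse_not]
    have h3 : rankWalk n m [!b] (r + -stepSum m n bs) = [r - stepSum m n bs] := by
      simp [rankWalk]; ring
    rw [h3, stepSum_cons]
    have h4 : r - ((if b then m else -n) + stepSum m n bs) + (if b then m else -n)
        = r - stepSum m n bs := by ring
    rw [show rankWalk m n (b :: bs) (r - ((if b then m else -n) + stepSum m n bs))
        = (r - ((if b then m else -n) + stepSum m n bs)) ::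
          rankWalk m n bs (r - stepSum m n bs) from by rw [rankWalk, h4]]
    rw [List.reverse_cons, ih]
    simp

lemma stepSum_eq (m n : ℤ) (P : List Bool) :
    stepSum m n P = m * P.count true - n * P.count false := by
  induction P with
  | nil => simp [stepSum]
  | cons b bs ih => cases b <;> simp [stepSum_cons, ih] <;> ring

lemma count_true_map_not (P : List Bool) : (P.map not).count true = P.count false := by
  induction P with
  | nil => simp
  | cons b bs ih => cases b <;> simp [ih]

lemma zero_mem_rankWalk (m n : ℤ) (P : List Bool) (h : P ≠ []) :
    (0 : ℤ) ∈ rankWalk m n P 0 := by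
  cases P with
  | nil => exact absurd rfl h
  | cons b bs => simp [rankWalk]

lemma transpose_dyck (m n : ℕ) (hmn : 0 < m + n) (R : Finset ℤ)
    (h : IsDyckRankSet m n R) : IsDyckRankSet n m R := by
  obtain ⟨P, ⟨⟨hlen, hct⟩, hnn⟩, hR⟩ := h
  have hPne : P ≠ [] := by
    intro h; rw [h] at hlen; simp at hlen; omega
  have hcf : P.count false = m := by
    have := List.count_true_add_count_false P
    omega
  have hss : stepSum (m : ℤ) (n : ℤ) P = 0 := by
    rw [stepSum_eq, hct, hcf]; ring
  set P' : List Bool := (P.map not).reverse with hP'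
  have hP'ne : P' ≠ [] := by
    simp [hP', hPne]
  have hkey : rankWalk (n : ℤ) (m : ℤ) P' 0 ++ [0]
      = 0 :: (rankWalk (m : ℤ) (n : ℤ) P 0).reverse := by
    have := rankWalk_transpose (m : ℤ) (n : ℤ) P 0
    rw [hss] at this
    simpa using this
  have hsets : (rankWalk (n : ℤ) (m : ℤ) P' 0).toFinset
      = (rankWalk (m : ℤ) (n : ℤ) P 0).toFinset := by
    have hA := zero_mem_rankWalk (n:ℤ) (m:ℤ) P' hP'ne
    have hB := zero_mem_rankWalk (m:ℤ) (n:ℤ) P hPne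
    ext x
    simp only [List.mem_toFinset]
    constructor
    · intro hx
      have hx' : x ∈ rankWalk (n:ℤ) (m:ℤ) P' 0 ++ [0] := List.mem_append_left _ hx
      rw [hkey] at hx'
      rcases List.mem_cons.1 hx' with h | h
      · exact h ▸ hB
      · exact List.mem_reverse.1 h
    · intro hx
      have hx' : x ∈ (0:ℤ) :: (rankWalk (m:ℤ) (n:ℤ) P 0).reverse :=
        List.mem_cons_of_mem _ (List.mem_reverse.2 hx)
      rw [← hkey] at hx'
      rcases List.mem_append.1 hx' with h | h
      · exact h
      · simp only [List.mem_singleton] at h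
        exact h ▸ hA
  refine ⟨P', ⟨⟨?_, ?_⟩, ?_⟩, ?_⟩
  · simp [hP', hlen, Nat.add_comm]
  · rw [hP', List.count_reverse, count_true_map_not, hcf]
  · intro r hr
    have : r ∈ rankWalk (n : ℤ) (m : ℤ) P' 0 ++ [0] := List.mem_append_left _ hr
    rw [hkey] at this
    rcases List.mem_cons.1 this with h | h
    · exact h.ge
    · exact hnn r (List.mem_reverse.1 h)
  · rw [rankSet, hsets]; exact hR

/-- For a coprime pair `(m,n)` of positive integers and a set `R` of
`m + n` nonnegative integers, `R` is the rank set of an `(m,n)`-Dyck path if and only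
if `R` is the rank set of an `(n,m)`-Dyck path (roles of `m` and `n` interchanged). -/
theorem dyck_rank_set_transpose (m n : ℕ) (hm : 0 < m) (hn : 0 < n)
    (hcop : Nat.Coprime m n) (R : Finset ℤ) (hcard : R.card = m + n)
    (hpos : ∀ r ∈ R, 0 ≤ r) :
    IsDyckRankSet m n R ↔ IsDyckRankSet n m R := by
  constructor
  · exact transpose_dyck m n (by omega) R
  · exact transpose_dyck n m (by omega) R
end

section
/- Let m = kn + d be coprime to n with 1 ≤ d ≤ n−1 and k ≥ 1. Let σ be a word of n S's and m W's, and suppose there is a set R of m+n nonnegative integers with 0 ∈ R compatible with σ, with sorted sequence 𝔯_1<…<𝔯_{m+n}. Define positions f_0 = 1 and f_i = σ^{-1}(W_{f_{i−1}}) for 1 ≤ i ≤ k+1. Then the ranks 0, n, 2n, …, (k+1)n all belong to R, and 𝔯_{f_i} = i·n for 0 ≤ i ≤ k+1. -/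
/-- A set `R` of `m + n` nonnegative integers containing `0`, with sorted sequence
`𝔯_1 < ⋯ < 𝔯_{m+n}`, is compatible with the word `σ` (where `true` = `S`, `false` = `W`)
if `𝔯_{σ⁻¹(S_i)} + m ∈ R` for all `i` and `𝔯_{σ⁻¹(W_j)} - n ∈ R` for all `j`. -/
def Compatible (m n : ℕ) (σ : List Bool) (R : Finset ℤ) : Prop :=
  R.card = m + n ∧ (0 : ℤ) ∈ R ∧ (∀ r ∈ R, 0 ≤ r) ∧
    ∀ p ∈ σ.zip (R.sort (· ≤ ·)),
      (p.1 = true → p.2 + (m : ℤ) ∈ R) ∧ (p.1 = false → p.2 - (n : ℤ) ∈ R)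

/-- The 1-based position of the `j`-th (1-based) occurrence of the letter `b` in the
word `w`; e.g. `nthPos w false j` is the position `σ⁻¹(W_j)` of the `j`-th `W`. -/
def nthPos (w : List Bool) (b : Bool) (j : ℕ) : ℕ :=
  ((List.range w.length).filter (fun p => w.getD p (!b) == b)).getD (j - 1) 0 + 1

/-- The positions `f_0 = 1` and `f_i = σ⁻¹(W_{f_{i-1}})`. -/
def fseq (σ : List Bool) : ℕ → ℕ
  | 0 => 1
  | i + 1 => nthPos σ false (fseq σ i)

/-- `𝔯_i`, the `i`-th smallest element of `R` (1-based). -/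
def sortedRank (R : Finset ℤ) (i : ℕ) : ℤ :=
  (R.sort (· ≤ ·)).getD (i - 1) 0

/-!
Let `g` send a rank `v ∈ R` to `v + m` or `v - n` according to the letter of `σ` at the position
of `v`; compatibility says that `g` maps `R` to itself. Along a cycle of `g` with `a` steps `+m`
and `b` steps `-n` we have `a * m = b * n`, so coprimality forces its length `a + b` to be at
least `m + n = #R`: the orbit of a periodic point is all of `R`, and `g` is surjective. A rank
`z < m` cannot be `v + m` with `v ≥ 0`, so `z + n` is a rank carrying a `W`. Starting from `0`
this puts `n, 2n, …, (k+1)n` in `R`; and `v ↦ v - n` matches the `W`-ranks below `(i+1)·n` with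
the ranks below `i·n`, so `(i+1)·n` sits at the position of the `W` whose index is the position
of `i·n`, which is `f_{i+1}`.
-/

open Finset Function

theorem List.Pairwise.getD_length_filter_lt {α : Type*} [LinearOrder α] {l : List α}
    (hl : l.Pairwise (· < ·)) {x : α} (hx : x ∈ l) (d : α) :
    l.getD (l.filter (· < x)).length d = x := by
  induction l with
  | nil => simp at hx
  | cons a l ih =>
    obtain ⟨ha, hl⟩ := List.pairwise_cons.mp hl
    rcases List.mem_cons.mp hx with rfl | hx
    · have : l.filter (· < x) = [] :=
        List.filter_eq_nil_iff.mpr fun y hy => by simpa using (ha y hy).le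
      simp [this]
    · simpa [ha x hx] using ih hl hx

theorem Finset.getD_sort_card_filter_lt {α : Type*} [LinearOrder α] {s : Finset α} {x : α}
    (hx : x ∈ s) (d : α) : (s.sort (· ≤ ·)).getD #{y ∈ s | y < x} d = x := by
  have hlen : ((s.sort (· ≤ ·)).filter (· < x)).length = #{y ∈ s | y < x} := by
    rw [← List.toFinset_card_of_nodup ((s.sort_nodup _).filter _), List.toFinset_filter,
      sort_toFinset]
    simp
  rw [← hlen]
  exact (s.sortedLT_sort).pairwise.getD_length_filter_lt ((s.mem_sort _).mpr hx) d

theorem nthPos_card_filter_add_one {w : List Bool} {b : Bool} {p : ℕ} (hp : p < w.length)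
    (hb : w.getD p (!b) = b) : nthPos w b (#{q ∈ range p | w.getD q (!b) = b} + 1) = p + 1 := by
  set S := {q ∈ range w.length | w.getD q (!b) = b}
  have hsort : S.sort (· ≤ ·) = (List.range w.length).filter (fun q => w.getD q (!b) == b) := by
    rw [← (List.toFinset_sort (r := (· ≤ ·)) ((List.nodup_range).filter _)).mpr
      (List.pairwise_le_range.filter _)]
    congr 1
    ext q
    simp [S]
  have hcard : #{q ∈ range p | w.getD q (!b) = b} = #{q ∈ S | q < p} := by
    congr 1
    ext q
    simp only [S, mem_filter, mem_range]
    grind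
  rw [nthPos, Nat.add_sub_cancel, ← hsort, hcard,
    getD_sort_card_filter_lt (mem_filter.mpr ⟨mem_range.mpr hp, hb⟩)]

section RankIndex

variable {α : Type*} [LinearOrder α]

/-- The position of `v` in the increasing enumeration of `R`, counted from `0`. -/
def rankIndex (R : Finset α) (v : α) : ℕ := #{u ∈ R | u < v}

theorem rankIndex_lt_card {R : Finset α} {v : α} (hv : v ∈ R) : rankIndex R v < #R :=
  card_lt_card (filter_ssubset.mpr ⟨v, hv, lt_irrefl v⟩)

theorem rankIndex_lt_rankIndex {R : Finset α} {v w : α} (hv : v ∈ R) (hvw : v < w) :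
    rankIndex R v < rankIndex R w := by
  refine card_lt_card ⟨fun x hx => ?_, fun hsub => ?_⟩
  · simp only [mem_filter] at hx ⊢
    exact ⟨hx.1, hx.2.trans hvw⟩
  · simpa using (mem_filter.mp (hsub (mem_filter.mpr ⟨hv, hvw⟩))).2

theorem rankIndex_injOn (R : Finset α) : Set.InjOn (rankIndex R) R :=
  StrictMonoOn.injOn fun _ hv _ _ hvw => rankIndex_lt_rankIndex hv hvw

theorem image_rankIndex_filter_lt (R : Finset α) (w : α) :
    {v ∈ R | v < w}.image (rankIndex R) = range (rankIndex R w) := by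
  refine eq_of_subset_of_card_le (fun p hp => ?_) ?_
  · obtain ⟨v, hv, rfl⟩ := mem_image.mp hp
    exact mem_range.mpr (rankIndex_lt_rankIndex (mem_filter.mp hv).1 (mem_filter.mp hv).2)
  · rw [card_range,
      card_image_of_injOn ((rankIndex_injOn R).mono (coe_subset.mpr (filter_subset _ _)))]
    rfl

end RankIndex

theorem sortedRank_rankIndex_add_one {R : Finset ℤ} {v : ℤ} (hv : v ∈ R) :
    sortedRank R (rankIndex R v + 1) = v :=
  getD_sort_card_filter_lt hv 0

theorem Nat.Coprime.add_le_add_of_mul_eq {m n a b : ℕ} (hcop : m.Coprime n) (h : a * m = b * n)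
    (hab : 0 < a + b) : m + n ≤ a + b := by
  have hna : n ∣ a := hcop.symm.dvd_of_dvd_mul_right ⟨b, by rw [h, mul_comm]⟩
  have hmb : m ∣ b := hcop.dvd_of_dvd_mul_right ⟨a, by rw [← h, mul_comm]⟩
  rcases Nat.eq_zero_or_pos a with rfl | ha
  · obtain rfl : n = 0 := by simp at h; omega
    have := (Nat.coprime_zero_right m).mp hcop
    omega
  rcases Nat.eq_zero_or_pos b with rfl | hb
  · obtain rfl : m = 0 := by simp at h; omega
    have := (Nat.coprime_zero_left n).mp hcop
    omega
  have := Nat.le_of_dvd ha hna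
  have := Nat.le_of_dvd hb hmb
  omega

section Dynamics

variable {f : ℤ → ℤ} {s : Set ℤ} {m n : ℕ}

theorem exists_iterate_eq_add_sub (hf : Set.MapsTo f s s)
    (hstep : ∀ x ∈ s, f x = x + m ∨ f x = x - n) {y : ℤ} (hy : y ∈ s) (ℓ : ℕ) :
    ∃ a b : ℕ, a + b = ℓ ∧ f^[ℓ] y = y + a * m - b * n := by
  induction ℓ with
  | zero => exact ⟨0, 0, rfl, by simp⟩
  | succ ℓ ih =>
    obtain ⟨a, b, hab, hℓ⟩ := ih
    rw [iterate_succ_apply']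
    rcases hstep _ (hf.iterate ℓ hy) with h | h
    · exact ⟨a + 1, b, by omega, by rw [h, hℓ]; push_cast; ring⟩
    · exact ⟨a, b + 1, by omega, by rw [h, hℓ]; push_cast; ring⟩

theorem add_le_minimalPeriod (hcop : m.Coprime n) (hf : Set.MapsTo f s s)
    (hstep : ∀ x ∈ s, f x = x + m ∨ f x = x - n) {y : ℤ} (hy : y ∈ s)
    (hper : y ∈ periodicPts f) : m + n ≤ minimalPeriod f y := by
  obtain ⟨a, b, hab, hiter⟩ := exists_iterate_eq_add_sub hf hstep hy (minimalPeriod f y)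
  rw [iterate_minimalPeriod] at hiter
  have hmul : a * m = b * n := by exact_mod_cast (by linarith : (a * m : ℤ) = b * n)
  rw [← hab]
  exact hcop.add_le_add_of_mul_eq hmul (hab ▸ minimalPeriod_pos_of_mem_periodicPts hper)

end Dynamics

theorem Set.MapsTo.surjOn_of_card_le_minimalPeriod {α : Type*} {f : α → α} {s : Finset α}
    (hf : Set.MapsTo f s s) (hs : s.Nonempty)
    (h : ∀ y ∈ s, y ∈ periodicPts f → #s ≤ minimalPeriod f y) : Set.SurjOn f s s := by
  classical
  obtain ⟨y₀, hy₀⟩ := hs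
  obtain ⟨i, j, hij, heq⟩ := s.finite_toSet.exists_lt_map_eq_of_forall_mem
    (f := (f^[·] y₀)) fun j => hf.iterate j hy₀
  set y := f^[i] y₀
  have hy : y ∈ s := hf.iterate i hy₀
  have hper : y ∈ periodicPts f := by
    refine mk_mem_periodicPts (n := j - i) (by omega) ?_
    change f^[j - i] (f^[i] y₀) = f^[i] y₀
    rw [← iterate_add_apply, Nat.sub_add_cancel hij.le]
    exact heq.symm
  set p := minimalPeriod f y
  have hp : 0 < p := minimalPeriod_pos_of_mem_periodicPts hper
  have horbit : (Finset.range p).image (f^[·] y) = s := by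
    refine Finset.eq_of_subset_of_card_le (fun z hz => ?_) ?_
    · obtain ⟨k, -, rfl⟩ := Finset.mem_image.mp hz
      exact hf.iterate k hy
    · rw [Finset.card_image_of_injOn (by simpa using iterate_injOn_Iio_minimalPeriod),
        Finset.card_range]
      exact h y hy hper
  intro z hz
  obtain ⟨k, -, rfl⟩ := Finset.mem_image.mp (horbit ▸ hz)
  refine ⟨f^[k + p - 1] y, hf.iterate _ hy, ?_⟩
  rw [← iterate_succ_apply' f, Nat.succ_eq_add_one, Nat.sub_add_cancel (by omega),
    iterate_add_minimalPeriod_eq]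

def letterAt (σ : List Bool) (R : Finset ℤ) (v : ℤ) : Bool := σ.getD (rankIndex R v) true

def rankStep (m n : ℕ) (σ : List Bool) (R : Finset ℤ) (v : ℤ) : ℤ :=
  if letterAt σ R v then v + m else v - n

theorem rankStep_eq_add_or_eq_sub (m n : ℕ) (σ : List Bool) (R : Finset ℤ) (v : ℤ) :
    rankStep m n σ R v = v + m ∨ rankStep m n σ R v = v - n := by
  unfold rankStep
  split <;> simp

namespace Compatible

variable {m n : ℕ} {σ : List Bool} {R : Finset ℤ}

theorem mem_of_letterAt (hcomp : Compatible m n σ R) (hlen : σ.length = m + n) {v : ℤ}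
    (hv : v ∈ R) :
    (letterAt σ R v = true → v + m ∈ R) ∧ (letterAt σ R v = false → v - n ∈ R) := by
  set L := R.sort (· ≤ ·)
  have hp : rankIndex R v < (σ.zip L).length := by
    rw [List.length_zip, length_sort, hlen, hcomp.1, min_self, ← hcomp.1]
    exact rankIndex_lt_card hv
  have hpair := hcomp.2.2.2 _ (List.getElem_mem hp)
  have hL : L.getD (rankIndex R v) 0 = v := getD_sort_card_filter_lt hv 0
  rw [List.getElem_zip, ← List.getD_eq_getElem _ true, ← List.getD_eq_getElem _ 0, hL] at hpair
  exact hpair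

theorem mapsTo_rankStep (hcomp : Compatible m n σ R) (hlen : σ.length = m + n) :
    Set.MapsTo (rankStep m n σ R) R R := by
  intro v hv
  obtain ⟨hS, hW⟩ := hcomp.mem_of_letterAt hlen hv
  unfold rankStep
  cases h : letterAt σ R v
  · exact hW h
  · exact hS h

theorem surjOn_rankStep (hcomp : Compatible m n σ R) (hlen : σ.length = m + n)
    (hcop : m.Coprime n) : Set.SurjOn (rankStep m n σ R) R R :=
  (hcomp.mapsTo_rankStep hlen).surjOn_of_card_le_minimalPeriod ⟨0, hcomp.2.1⟩ fun _ hy hper =>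
    hcomp.1 ▸ add_le_minimalPeriod hcop (hcomp.mapsTo_rankStep hlen)
      (fun x _ => rankStep_eq_add_or_eq_sub m n σ R x) hy hper

theorem add_mem_of_lt (hcomp : Compatible m n σ R) (hlen : σ.length = m + n)
    (hcop : m.Coprime n) {z : ℤ} (hz : z ∈ R) (hzm : z < m) :
    z + n ∈ R ∧ letterAt σ R (z + n) = false := by
  obtain ⟨x, hx, hxz⟩ := hcomp.surjOn_rankStep hlen hcop hz
  have hx0 := hcomp.2.2.1 x hx
  unfold rankStep at hxz
  cases h : letterAt σ R x
  · rw [h] at hxz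
    obtain rfl : x = z + n := by simp at hxz; omega
    exact ⟨hx, h⟩
  · rw [h] at hxz
    simp at hxz
    omega

theorem card_filter_getD_eq_false (hcomp : Compatible m n σ R) (hlen : σ.length = m + n)
    (hcop : m.Coprime n) {t : ℤ} (ht : t ≤ m) :
    #{q ∈ range (rankIndex R (t + n)) | σ.getD q true = false} = rankIndex R t := by
  have hW : {v ∈ R | v < t + n ∧ letterAt σ R v = false} =
      {u ∈ R | u < t}.image (· + (n : ℤ)) := by
    ext v
    simp only [mem_filter, mem_image]
    constructor
    · rintro ⟨hv, hvt, hlet⟩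
      exact ⟨v - n, ⟨(hcomp.mem_of_letterAt hlen hv).2 hlet, by omega⟩, by ring⟩
    · rintro ⟨u, ⟨hu, hut⟩, rfl⟩
      obtain ⟨hun, hlet⟩ := hcomp.add_mem_of_lt hlen hcop hu (by omega)
      exact ⟨hun, by omega, hlet⟩
  rw [← image_rankIndex_filter_lt, filter_image, filter_filter,
    card_image_of_injOn ((rankIndex_injOn R).mono (coe_subset.mpr (filter_subset _ _)))]
  change #{v ∈ R | v < t + n ∧ letterAt σ R v = false} = _
  rw [hW, card_image_of_injective _ (add_left_injective _)]
  rfl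

theorem mem_and_fseq_eq (hcomp : Compatible m n σ R) (hlen : σ.length = m + n)
    (hcop : m.Coprime n) :
    ∀ i, i * n < m + n →
      ((i * n : ℕ) : ℤ) ∈ R ∧ fseq σ i = rankIndex R ((i * n : ℕ) : ℤ) + 1
  | 0, _ => by
    refine ⟨by simpa using hcomp.2.1, ?_⟩
    simpa [fseq, rankIndex, filter_eq_empty_iff] using hcomp.2.2.1
  | i + 1, hi => by
    rw [Nat.succ_mul] at hi
    obtain ⟨ht, hf⟩ := hcomp.mem_and_fseq_eq hlen hcop i (by omega)
    set t : ℤ := ((i * n : ℕ) : ℤ)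
    obtain ⟨htn, hlet⟩ := hcomp.add_mem_of_lt hlen hcop ht (by omega)
    have hcast : (((i + 1) * n : ℕ) : ℤ) = t + n := by push_cast [t]; ring
    have hpos := nthPos_card_filter_add_one (b := false)
      (hlen ▸ hcomp.1 ▸ rankIndex_lt_card htn) hlet
    simp only [Bool.not_false] at hpos
    refine ⟨hcast ▸ htn, ?_⟩
    rw [fseq, hf, hcast, ← hcomp.card_filter_getD_eq_false hlen hcop (by omega), hpos]

end Compatible

theorem compatible_positions_of_multiples_general (m n k d : ℕ)
    (hd1 : 1 ≤ d) (hmd : m = k * n + d)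
    (hcop : Nat.Coprime m n) (σ : List Bool) (hlen : σ.length = m + n)
    (R : Finset ℤ) (hcomp : Compatible m n σ R) :
    (∀ i ≤ k + 1, ((i * n : ℕ) : ℤ) ∈ R) ∧
    (∀ i ≤ k + 1, sortedRank R (fseq σ i) = ((i * n : ℕ) : ℤ)) := by
  have hlt : ∀ i ≤ k + 1, i * n < m + n := fun i hi =>
    calc i * n ≤ (k + 1) * n := Nat.mul_le_mul_right n hi
      _ < m + n := by rw [Nat.succ_mul]; omega
  refine ⟨fun i hi => (hcomp.mem_and_fseq_eq hlen hcop i (hlt i hi)).1, fun i hi => ?_⟩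
  obtain ⟨hmem, hf⟩ := hcomp.mem_and_fseq_eq hlen hcop i (hlt i hi)
  rw [hf, sortedRank_rankIndex_add_one hmem]

/-- Let `m = kn + d` be coprime to `n` with `1 ≤ d ≤ n-1` and `k ≥ 1`.
If the set `R` is compatible with the word `σ` of `n` `S`'s and `m` `W`'s, then the
ranks `0, n, 2n, …, (k+1)n` all belong to `R`, and `𝔯_{f_i} = i·n` for `0 ≤ i ≤ k+1`,
where `f_0 = 1` and `f_i = σ⁻¹(W_{f_{i-1}})`. -/
theorem compatible_positions_of_multiples (m n k d : ℕ) (hn : 0 < n)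
    (hd1 : 1 ≤ d) (hd2 : d ≤ n - 1) (hk : 1 ≤ k) (hmd : m = k * n + d)
    (hcop : Nat.Coprime m n) (σ : List Bool) (hlen : σ.length = m + n)
    (hcount : σ.count true = n) (R : Finset ℤ) (hcomp : Compatible m n σ R) :
    (∀ i ≤ k + 1, ((i * n : ℕ) : ℤ) ∈ R) ∧
    (∀ i ≤ k + 1, sortedRank R (fseq σ i) = ((i * n : ℕ) : ℤ)) :=
  compatible_positions_of_multiples_general m n k d hd1 hmd hcop σ hlen R hcomp
end
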